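/- Let q and p₀ be probability distributions on A, let γ ∈ [0,1], and set p = (1−γ)·q + γ·p₀ (componentwise). Then the matrix V(p) − γ·V(p₀) is positive semidefinite. -/

import Mathlib

/-!
Write `S_r(c) = ∑ₐ r_a (φ_a − c)(φ_a − c)ᵀ` for the scatter of the weights `r` about a centre `c`,
so that `V(r) = S_r(μ(r))`. For a fixed centre, `S_r(c)` is linear in `r`, and when `∑ₐ r_a = 1`
the parallel axis theorem gives `S_r(c) = V(r) + (μ(r) − c)(μ(r) − c)ᵀ`. Splitting
`V(p) = S_p(μ(p))` along `p = (1 − γ) q + γ p₀` therefore yields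
`V(p) − γ V(p₀) = (1 − γ) S_q(μ(p)) + γ (μ(p₀) − μ(p))(μ(p₀) − μ(p))ᵀ`,
a nonnegative combination of positive semidefinite matrices.
-/

open Matrix Finset

/-- Mean feature vector `μ(p) = ∑_a p_a φ_a`. -/
noncomputable def featMean {A : Type*} [Fintype A] {d : ℕ} (φ : A → Fin d → ℝ)
    (p : A → ℝ) : Fin d → ℝ :=
  ∑ a, p a • φ a

/-- Centered feature covariance matrix `V(p) = ∑_a p_a φ̄_a φ̄_a^⊤`, where
`φ̄_a = φ_a − μ(p)`. -/
noncomputable def covMat {A : Type*} [Fintype A] {d : ℕ} (φ : A → Fin d → ℝ)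
    (p : A → ℝ) : Matrix (Fin d) (Fin d) ℝ :=
  ∑ a, p a • Matrix.vecMulVec (φ a - featMean φ p) (φ a - featMean φ p)

theorem Matrix.sum_vecMulVec {ι m n α : Type*} [NonUnitalNonAssocSemiring α] (s : Finset ι)
    (w : ι → m → α) (v : n → α) : vecMulVec (∑ i ∈ s, w i) v = ∑ i ∈ s, vecMulVec (w i) v := by
  ext; simp [vecMulVec_apply, sum_apply, Finset.sum_mul]

theorem Matrix.vecMulVec_sum {ι m n α : Type*} [NonUnitalNonAssocSemiring α] (s : Finset ι)
    (w : m → α) (v : ι → n → α) : vecMulVec w (∑ i ∈ s, v i) = ∑ i ∈ s, vecMulVec w (v i) := by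
  ext; simp [vecMulVec_apply, sum_apply, Finset.mul_sum]

theorem Matrix.posSemidef_vecMulVec_self {n : Type*} [Finite n] (v : n → ℝ) :
    (vecMulVec v v).PosSemidef := by
  simpa using posSemidef_vecMulVec_self_star v

theorem Matrix.posSemidef_sum_smul_vecMulVec_self {ι n : Type*} [Fintype ι] [Finite n]
    {w : ι → ℝ} (hw : ∀ i, 0 ≤ w i) (v : ι → n → ℝ) :
    (∑ i, w i • vecMulVec (v i) (v i)).PosSemidef :=
  posSemidef_sum _ fun i _ => (posSemidef_vecMulVec_self (v i)).smul (hw i)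

noncomputable def scatterMat {A : Type*} [Fintype A] {d : ℕ} (φ : A → Fin d → ℝ)
    (r : A → ℝ) (c : Fin d → ℝ) : Matrix (Fin d) (Fin d) ℝ :=
  ∑ a, r a • vecMulVec (φ a - c) (φ a - c)

section
variable {A : Type*} [Fintype A] {d : ℕ} (φ : A → Fin d → ℝ)

theorem sum_smul_sub_featMean {r : A → ℝ} (hr : ∑ a, r a = 1) (c : Fin d → ℝ) :
    ∑ a, r a • (φ a - c) = featMean φ r - c := by
  simp [smul_sub, sum_sub_distrib, ← sum_smul, hr, featMean]

theorem scatterMat_eq_covMat_add {r : A → ℝ} (hr : ∑ a, r a = 1) (c : Fin d → ℝ) :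
    scatterMat φ r c = covMat φ r + vecMulVec (featMean φ r - c) (featMean φ r - c) := by
  set μ := featMean φ r
  have hsplit : ∀ a, φ a - c = (φ a - μ) + (μ - c) := fun a => by abel
  have hcenter : ∑ a, r a • (φ a - μ) = 0 := by rw [sum_smul_sub_featMean φ hr, sub_self]
  have hleft : ∑ a, r a • vecMulVec (φ a - μ) (μ - c) = 0 := by
    simp_rw [← smul_vecMulVec, ← sum_vecMulVec, hcenter, zero_vecMulVec]
  have hright : ∑ a, r a • vecMulVec (μ - c) (φ a - μ) = 0 := by
    simp_rw [← vecMulVec_smul, ← vecMulVec_sum, hcenter, vecMulVec_zero]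
  simp only [scatterMat, covMat, hsplit, add_vecMulVec, vecMulVec_add, smul_add, sum_add_distrib,
    hleft, hright, ← sum_smul, hr, one_smul, add_zero, zero_add]
  rfl

theorem scatterMat_add (r s : A → ℝ) (c : Fin d → ℝ) :
    scatterMat φ (r + s) c = scatterMat φ r c + scatterMat φ s c := by
  simp [scatterMat, add_smul, sum_add_distrib]

theorem scatterMat_smul (t : ℝ) (r : A → ℝ) (c : Fin d → ℝ) :
    scatterMat φ (t • r) c = t • scatterMat φ r c := by
  simp [scatterMat, smul_sum, mul_smul]

theorem posSemidef_scatterMat {r : A → ℝ} (hr : ∀ a, 0 ≤ r a) (c : Fin d → ℝ) :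
    (scatterMat φ r c).PosSemidef :=
  posSemidef_sum_smul_vecMulVec_self hr _

end

theorem mixture_covariance_domination_general
    {A : Type*} [Fintype A] {d : ℕ}
    (φ : A → Fin d → ℝ) (q p₀ : A → ℝ)
    (hq : ∀ a, 0 ≤ q a)
    (hp₀1 : ∑ a, p₀ a = 1)
    (γ : ℝ) (hγ0 : 0 ≤ γ) (hγ1 : γ ≤ 1)
    (p : A → ℝ) (hpdef : ∀ a, p a = (1 - γ) * q a + γ * p₀ a) :
    (covMat φ p - γ • covMat φ p₀).PosSemidef := by
  have hp : p = (1 - γ) • q + γ • p₀ := funext fun a => by simp [hpdef]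
  set μ := featMean φ p
  have hdecomp : covMat φ p - γ • covMat φ p₀ =
      (1 - γ) • scatterMat φ q μ + γ • vecMulVec (featMean φ p₀ - μ) (featMean φ p₀ - μ) := by
    have hcov : covMat φ p = scatterMat φ p μ := rfl
    rw [hcov, hp, scatterMat_add, scatterMat_smul, scatterMat_smul,
      scatterMat_eq_covMat_add φ hp₀1]
    module
  rw [hdecomp]
  exact ((posSemidef_scatterMat φ hq μ).smul (sub_nonneg.2 hγ1)).add
    ((posSemidef_vecMulVec_self _).smul hγ0)

/-- mixture domination `V(p) ⪰ γ V(p₀)` from Lemma 11. If `q` and `p₀` are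
probability distributions on `A`, `γ ∈ [0,1]`, and `p = (1−γ)q + γp₀` componentwise, then
`V(p) − γ V(p₀)` is positive semidefinite. -/
theorem mixture_covariance_domination
    {A : Type*} [Fintype A] [Nonempty A] {d : ℕ} (hd : 1 ≤ d)
    (φ : A → Fin d → ℝ) (q p₀ : A → ℝ)
    (hq : ∀ a, 0 ≤ q a) (hq1 : ∑ a, q a = 1)
    (hp₀ : ∀ a, 0 ≤ p₀ a) (hp₀1 : ∑ a, p₀ a = 1)
    (γ : ℝ) (hγ0 : 0 ≤ γ) (hγ1 : γ ≤ 1)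
    (p : A → ℝ) (hpdef : ∀ a, p a = (1 - γ) * q a + γ * p₀ a) :
    (covMat φ p - γ • covMat φ p₀).PosSemidef :=
  mixture_covariance_domination_general φ q p₀ hq hp₀1 γ hγ0 hγ1 p hpdef
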